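/- arXiv:1705.04484 — 2 statements merged into one kernel-verified Lean document; each statement's English description precedes it below -/
import Mathlib

section
/- Let G be a finite graph with symmetric edge weights and Ω a finite subset of vertices with Ω̃ connected, and let δ_I Ω = {x ∈ Ω : x ∼ y for some y ∈ δΩ}. Then dim E_1(Λ) ≥ ♯δΩ − ♯δ_I Ω, where E_1(Λ) = {φ : δΩ → ℝ : Λφ = φ} is the eigenspace of the Dirichlet-to-Neumann operator for the eigenvalue 1. In particular, if ♯δΩ > ♯δ_I Ω then E_1(Λ) ≠ {0}. -/
/-!
If φ is supported on δΩ and, for every x ∈ δ_IΩ, the weighted sum Σ_{z ∈ δΩ} μ_{xz} φ(z)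
vanishes, then the extension of φ by zero is harmonic on Ω (the Laplacian at x ∈ Ω only sees
the boundary values, and only at x ∈ δ_IΩ), so Λφ(z) = φ(z) · m_z / m_z = φ. Hence E₁(Λ)
contains the kernel of a linear map from ℝ^{δΩ} to ℝ^{δ_IΩ}, whose dimension is at least
♯δΩ − ♯δ_IΩ by rank–nullity.
-/

open scoped Classical
open Finset

variable {V : Type*} [Fintype V]

/-- The vertex boundary δΩ of a finite set Ω of vertices. -/
noncomputable def bdry (μ : V → V → ℝ) (Ω : Finset V) : Finset V :=
  Finset.univ.filter fun x => x ∉ Ω ∧ ∃ y ∈ Ω, 0 < μ x y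

/-- Ω̄ = Ω ∪ δΩ. -/
noncomputable def clos (μ : V → V → ℝ) (Ω : Finset V) : Finset V :=
  Ω ∪ bdry μ Ω

/-- The vertex measure m on Ω̄. -/
noncomputable def vm (μ : V → V → ℝ) (Ω : Finset V) (x : V) : ℝ :=
  if x ∈ Ω then ∑ y, μ x y else ∑ y ∈ Ω, μ x y

/-- m(B) = Σ_{x ∈ B} m_x. -/
noncomputable def msum (μ : V → V → ℝ) (Ω : Finset V) (B : Finset V) : ℝ :=
  ∑ x ∈ B, vm μ Ω x

/-- Sum over the edges e = {x,y} of E(Ω,Ω̄) of μ_{xy} · F x y (for symmetric F). -/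
noncomputable def edgeSum (μ : V → V → ℝ) (Ω : Finset V) (F : V → V → ℝ) : ℝ :=
  (∑ x ∈ Ω, ∑ y ∈ Ω, μ x y * F x y) / 2 +
    ∑ x ∈ Ω, ∑ y ∈ bdry μ Ω, μ x y * F x y

/-- Dirichlet energy D_Ω(f). -/
noncomputable def dirichlet (μ : V → V → ℝ) (Ω : Finset V) (f : V → ℝ) : ℝ :=
  edgeSum μ Ω fun x y => (f x - f y) ^ 2

/-- Dirichlet form D_Ω(f,g). -/
noncomputable def dform (μ : V → V → ℝ) (Ω : Finset V) (f g : V → ℝ) : ℝ :=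
  edgeSum μ Ω fun x y => (f x - f y) * (g x - g y)

/-- μ(∂_Ω A): total weight of the edges of E(Ω,Ω̄) with exactly one endpoint in A. -/
noncomputable def cut (μ : V → V → ℝ) (Ω : Finset V) (A : Finset V) : ℝ :=
  edgeSum μ Ω fun x y => if (x ∈ A) ↔ (y ∈ A) then 0 else 1

/-- The graph Laplacian Δf(x) (used for x ∈ Ω). -/
noncomputable def lap (μ : V → V → ℝ) (Ω : Finset V) (f : V → ℝ) (x : V) : ℝ :=
  (∑ y, μ x y * (f y - f x)) / vm μ Ω x

/-- The outward normal derivative ∂f/∂n(z) (used for z ∈ δΩ). -/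
noncomputable def nderiv (μ : V → V → ℝ) (Ω : Finset V) (f : V → ℝ) (z : V) : ℝ :=
  (∑ x ∈ Ω, μ z x * (f z - f x)) / vm μ Ω z

/-- f is harmonic on Ω. -/
def IsHarmonic (μ : V → V → ℝ) (Ω : Finset V) (u : V → ℝ) : Prop :=
  ∀ x ∈ Ω, lap μ Ω u x = 0

/-- Adjacency in the graph Ω̃ = (Ω̄, E(Ω,Ω̄)). -/
def tilAdj (μ : V → V → ℝ) (Ω : Finset V) (x y : V) : Prop :=
  0 < μ x y ∧ (x ∈ Ω ∨ y ∈ Ω)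

/-- The graph Ω̃ is connected. -/
def TilConnected (μ : V → V → ℝ) (Ω : Finset V) : Prop :=
  ∀ x ∈ clos μ Ω, ∀ y ∈ clos μ Ω, Relation.ReflTransGen (tilAdj μ Ω) x y

/-- λ₁(Ω): the first nontrivial eigenvalue of the Dirichlet-to-Neumann operator,
characterized by its Rayleigh quotient. -/
noncomputable def lambda1 (μ : V → V → ℝ) (Ω : Finset V) : ℝ :=
  sInf { r : ℝ | ∃ u : V → ℝ, IsHarmonic μ Ω u ∧
    (∑ x ∈ bdry μ Ω, u x ^ 2 * vm μ Ω x) = 1 ∧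
    (∑ x ∈ bdry μ Ω, u x * vm μ Ω x) = 0 ∧
    r = dirichlet μ Ω u }

/-- The Escobar-type Cheeger constant h_E(Ω̃). -/
noncomputable def hE (μ : V → V → ℝ) (Ω : Finset V) : ℝ :=
  sInf { r : ℝ | ∃ A : Finset V, A ⊆ clos μ Ω ∧
    0 < msum μ Ω (A ∩ bdry μ Ω) ∧
    msum μ Ω (A ∩ bdry μ Ω) ≤ msum μ Ω (bdry μ Ω) / 2 ∧
    r = cut μ Ω A / msum μ Ω (A ∩ bdry μ Ω) }

/-- The Jammes-type Cheeger constant h_J(Ω̃). -/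
noncomputable def hJ (μ : V → V → ℝ) (Ω : Finset V) : ℝ :=
  sInf { r : ℝ | ∃ A : Finset V, A ⊆ clos μ Ω ∧
    (A ∩ bdry μ Ω).Nonempty ∧
    msum μ Ω A ≤ msum μ Ω (clos μ Ω) / 2 ∧
    r = cut μ Ω A / msum μ Ω (A ∩ bdry μ Ω) }

/-- The classical Cheeger constant h(Ω̃). -/
noncomputable def cheeger (μ : V → V → ℝ) (Ω : Finset V) : ℝ :=
  sInf { r : ℝ | ∃ A : Finset V, A ⊆ clos μ Ω ∧ A.Nonempty ∧
    msum μ Ω A ≤ msum μ Ω (clos μ Ω) / 2 ∧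
    r = cut μ Ω A / msum μ Ω A }

/-- δ_IΩ = {x ∈ Ω : x ∼ y for some y ∈ δΩ}. -/
noncomputable def bdryI (μ : V → V → ℝ) (Ω : Finset V) : Finset V :=
  Ω.filter fun x => ∃ y ∈ bdry μ Ω, 0 < μ x y

theorem LinearMap.finrank_sub_finrank_le_finrank_ker {K M N : Type*} [DivisionRing K]
    [AddCommGroup M] [Module K M] [AddCommGroup N] [Module K N] [FiniteDimensional K M]
    [FiniteDimensional K N] (f : M →ₗ[K] N) :
    Module.finrank K M - Module.finrank K N ≤ Module.finrank K (LinearMap.ker f) := by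
  have := (LinearMap.range f).finrank_le
  have := LinearMap.finrank_range_add_finrank_ker f
  omega

section

variable (μ : V → V → ℝ) (Ω : Finset V)

theorem notMem_bdry_of_mem {x : V} (hx : x ∈ Ω) : x ∉ bdry μ Ω := fun hb =>
  (Finset.mem_filter.1 hb).2.1 hx

theorem vm_of_mem_bdry {z : V} (hz : z ∈ bdry μ Ω) : vm μ Ω z = ∑ x ∈ Ω, μ z x := by
  rw [vm, if_neg (Finset.mem_filter.1 hz).2.1]

noncomputable def bdryFlux : (bdry μ Ω → ℝ) →ₗ[ℝ] (bdryI μ Ω → ℝ) where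
  toFun φ x := ∑ z : bdry μ Ω, μ x z * φ z
  map_add' φ ψ := by
    funext x
    simp only [Pi.add_apply, mul_add, Finset.sum_add_distrib]
  map_smul' c φ := by
    funext x
    simp only [Pi.smul_apply, smul_eq_mul, RingHom.id_apply, Finset.mul_sum, mul_left_comm]

variable {μ Ω}

noncomputable def extendByZero (φ : bdry μ Ω → ℝ) (v : V) : ℝ :=
  if h : v ∈ bdry μ Ω then φ ⟨v, h⟩ else 0

theorem extendByZero_coe (φ : bdry μ Ω → ℝ) (z : bdry μ Ω) : extendByZero φ z = φ z :=
  dif_pos z.2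

theorem extendByZero_of_notMem (φ : bdry μ Ω → ℝ) {v : V} (hv : v ∉ bdry μ Ω) :
    extendByZero φ v = 0 :=
  dif_neg hv

theorem sum_mul_extendByZero (φ : bdry μ Ω → ℝ) (x : V) :
    ∑ y, μ x y * extendByZero φ y = ∑ z : bdry μ Ω, μ x z * φ z := by
  rw [← Finset.sum_subset (Finset.subset_univ (bdry μ Ω)) fun y _ hy => by
    rw [extendByZero_of_notMem φ hy, mul_zero], ← Finset.sum_coe_sort]
  simp only [extendByZero_coe]

theorem isHarmonic_extendByZero (hnn : ∀ x y, 0 ≤ μ x y) {φ : bdry μ Ω → ℝ}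
    (hφ : φ ∈ LinearMap.ker (bdryFlux μ Ω)) : IsHarmonic μ Ω (extendByZero φ) := by
  intro x hx
  have hflux : ∑ z : bdry μ Ω, μ x z * φ z = 0 := by
    by_cases hxI : x ∈ bdryI μ Ω
    · simpa only [bdryFlux, LinearMap.coe_mk, AddHom.coe_mk, Pi.zero_apply] using
        congrFun (LinearMap.mem_ker.1 hφ) ⟨x, hxI⟩
    · refine Finset.sum_eq_zero fun z _ => ?_
      have hμ : μ x z = 0 := (hnn x z).eq_of_not_lt' fun hpos =>
        hxI (Finset.mem_filter.2 ⟨hx, z, z.2, hpos⟩)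
      rw [hμ, zero_mul]
  simp only [lap, extendByZero_of_notMem φ (notMem_bdry_of_mem μ Ω hx), sub_zero,
    sum_mul_extendByZero, hflux, zero_div]

theorem nderiv_extendByZero (φ : bdry μ Ω → ℝ) (z : bdry μ Ω) (hz : vm μ Ω z ≠ 0) :
    nderiv μ Ω (extendByZero φ) z = φ z := by
  have hnum : ∑ x ∈ Ω, μ z x * (extendByZero φ z - extendByZero φ x) = vm μ Ω z * φ z := by
    rw [vm_of_mem_bdry μ Ω z.2, Finset.sum_mul]
    refine Finset.sum_congr rfl fun x hx => ?_
    rw [extendByZero_coe, extendByZero_of_notMem φ (notMem_bdry_of_mem μ Ω hx), sub_zero]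
  rw [nderiv, hnum, mul_div_cancel_left₀ _ hz]

theorem ker_bdryFlux_le_eigenspace_one (hnn : ∀ x y, 0 ≤ μ x y)
    (hm : ∀ z ∈ bdry μ Ω, vm μ Ω z ≠ 0) (Λ : (bdry μ Ω → ℝ) →ₗ[ℝ] (bdry μ Ω → ℝ))
    (hΛ : ∀ (φ : bdry μ Ω → ℝ) (u : V → ℝ), IsHarmonic μ Ω u → (∀ z : bdry μ Ω, u z = φ z) →
      ∀ z : bdry μ Ω, Λ φ z = nderiv μ Ω u z) :
    LinearMap.ker (bdryFlux μ Ω) ≤ LinearMap.ker (Λ - LinearMap.id) := by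
  intro φ hφ
  have hΛφ : Λ φ = φ := funext fun z => by
    rw [hΛ φ _ (isHarmonic_extendByZero hnn hφ) (extendByZero_coe φ) z,
      nderiv_extendByZero φ z (hm z z.2)]
  rw [LinearMap.mem_ker, LinearMap.sub_apply, hΛφ, LinearMap.id_apply, sub_self]

end

theorem stmt_13_general (μ : V → V → ℝ) (Ω : Finset V)
    (hnn : ∀ x y, 0 ≤ μ x y)
    (hm : ∀ x ∈ clos μ Ω, 0 < vm μ Ω x) :
    ∀ Λ : ({x // x ∈ bdry μ Ω} → ℝ) →ₗ[ℝ] ({x // x ∈ bdry μ Ω} → ℝ),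
      (∀ (φ : {x // x ∈ bdry μ Ω} → ℝ) (u : V → ℝ),
        IsHarmonic μ Ω u → (∀ z : {x // x ∈ bdry μ Ω}, u z = φ z) →
        ∀ z : {x // x ∈ bdry μ Ω}, Λ φ z = nderiv μ Ω u z) →
      (bdry μ Ω).card - (bdryI μ Ω).card ≤
          Module.finrank ℝ (LinearMap.ker (Λ - LinearMap.id)) ∧
      ((bdryI μ Ω).card < (bdry μ Ω).card → LinearMap.ker (Λ - LinearMap.id) ≠ ⊥) := by
  intro Λ hΛ
  have hm' : ∀ z ∈ bdry μ Ω, vm μ Ω z ≠ 0 := fun z hz =>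
    (hm z (Finset.mem_union_right Ω hz)).ne'
  have hdim : (bdry μ Ω).card - (bdryI μ Ω).card ≤
      Module.finrank ℝ (LinearMap.ker (Λ - LinearMap.id)) := by
    simpa only [Module.finrank_fintype_fun_eq_card, Fintype.card_coe] using
      (LinearMap.finrank_sub_finrank_le_finrank_ker (bdryFlux μ Ω)).trans
      (Submodule.finrank_mono (ker_bdryFlux_le_eigenspace_one hnn hm' Λ hΛ))
  refine ⟨hdim, fun hlt hbot => ?_⟩
  rw [hbot, finrank_bot] at hdim
  omega

/-- Corollary 3.8: dim E₁(Λ) ≥ ♯δΩ − ♯δ_IΩ; in particular E₁(Λ) ≠ {0} when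
♯δΩ > ♯δ_IΩ. -/
theorem stmt_13 (μ : V → V → ℝ) (Ω : Finset V)
    (hsym : ∀ x y, μ x y = μ y x) (hnn : ∀ x y, 0 ≤ μ x y)
    (hm : ∀ x ∈ clos μ Ω, 0 < vm μ Ω x) (hconn : TilConnected μ Ω) :
    ∀ Λ : ({x // x ∈ bdry μ Ω} → ℝ) →ₗ[ℝ] ({x // x ∈ bdry μ Ω} → ℝ),
      (∀ (φ : {x // x ∈ bdry μ Ω} → ℝ) (u : V → ℝ),
        IsHarmonic μ Ω u → (∀ z : {x // x ∈ bdry μ Ω}, u z = φ z) →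
        ∀ z : {x // x ∈ bdry μ Ω}, Λ φ z = nderiv μ Ω u z) →
      (bdry μ Ω).card - (bdryI μ Ω).card ≤
          Module.finrank ℝ (LinearMap.ker (Λ - LinearMap.id)) ∧
      ((bdryI μ Ω).card < (bdry μ Ω).card → LinearMap.ker (Λ - LinearMap.id) ≠ ⊥) :=
  stmt_13_general μ Ω hnn hm
end

section
/- Let G be a finite graph with symmetric edge weights and Ω a finite subset of vertices. Then the Jammes-type Cheeger constant is at most the Escobar-type Cheeger constant: h_J(Ω̃) ≤ h_E(Ω̃). -/
open scoped Classical
open Finset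

variable {V : Type*} [Fintype V]

/-!
An Escobar test set `A` (at most half of `m(δΩ)` on the boundary) either already meets Jammes'
volume constraint `m(A) ≤ m(Ω̄)/2`, or its complement `Ω̄ \ A` does. The complement has the same
cut, and since `A` carries at most half of `m(δΩ)`, the complement carries at least as much
boundary measure, so its ratio is no larger. The Escobar infimum is not over the empty set
(whose `sInf` is the junk value `0`): when `|δΩ| ≥ 2`, a boundary vertex of least measure carries
at most half of `m(δΩ)`.
-/

lemma Finset.exists_le_sum_div_two {α : Type*} {s : Finset α} {f : α → ℝ}
    (hf : ∀ x ∈ s, 0 ≤ f x) (hs : 2 ≤ s.card) : ∃ z ∈ s, f z ≤ (∑ x ∈ s, f x) / 2 := by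
  obtain ⟨z, hz, hmin⟩ := s.exists_min_image f (card_pos.mp (by omega))
  refine ⟨z, hz, ?_⟩
  have hcard_mul : (s.card : ℝ) * f z ≤ ∑ x ∈ s, f x := by
    simpa using s.card_nsmul_le_sum f (f z) hmin
  have hs' : (2 : ℝ) ≤ s.card := by exact_mod_cast hs
  nlinarith [hf z hz]

section CheegerConstants

variable (μ : V → V → ℝ) (Ω : Finset V)

def escobarRatios : Set ℝ :=
  { r | ∃ A : Finset V, A ⊆ clos μ Ω ∧
    0 < msum μ Ω (A ∩ bdry μ Ω) ∧
    msum μ Ω (A ∩ bdry μ Ω) ≤ msum μ Ω (bdry μ Ω) / 2 ∧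
    r = cut μ Ω A / msum μ Ω (A ∩ bdry μ Ω) }

def jammesRatios : Set ℝ :=
  { r | ∃ A : Finset V, A ⊆ clos μ Ω ∧
    (A ∩ bdry μ Ω).Nonempty ∧
    msum μ Ω A ≤ msum μ Ω (clos μ Ω) / 2 ∧
    r = cut μ Ω A / msum μ Ω (A ∩ bdry μ Ω) }

lemma hE_eq_sInf_escobarRatios : hE μ Ω = sInf (escobarRatios μ Ω) := rfl

lemma hJ_eq_sInf_jammesRatios : hJ μ Ω = sInf (jammesRatios μ Ω) := rfl

lemma self_subset_clos : Ω ⊆ clos μ Ω := subset_union_left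

lemma bdry_subset_clos : bdry μ Ω ⊆ clos μ Ω := subset_union_right

lemma edgeSum_congr {F G : V → V → ℝ}
    (h : ∀ x ∈ clos μ Ω, ∀ y ∈ clos μ Ω, F x y = G x y) : edgeSum μ Ω F = edgeSum μ Ω G := by
  have hsum : ∀ t ⊆ clos μ Ω, ∑ x ∈ Ω, ∑ y ∈ t, μ x y * F x y = ∑ x ∈ Ω, ∑ y ∈ t, μ x y * G x y :=
    fun t ht => sum_congr rfl fun x hx => sum_congr rfl fun y hy => by
      rw [h x (self_subset_clos μ Ω hx) y (ht hy)]
  unfold edgeSum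
  rw [hsum Ω (self_subset_clos μ Ω), hsum _ (bdry_subset_clos μ Ω)]

lemma cut_clos_sdiff (A : Finset V) : cut μ Ω (clos μ Ω \ A) = cut μ Ω A :=
  edgeSum_congr μ Ω fun x hx y hy => by simp [mem_sdiff, hx, hy, not_iff_not]

lemma sdiff_inter_bdry (A : Finset V) : (clos μ Ω \ A) ∩ bdry μ Ω = bdry μ Ω \ A := by
  ext t
  have : t ∈ bdry μ Ω → t ∈ clos μ Ω := fun ht => bdry_subset_clos μ Ω ht
  simp only [mem_inter, mem_sdiff]
  tauto

variable {μ Ω}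

lemma vm_nonneg (hnn : ∀ x y, 0 ≤ μ x y) (x : V) : 0 ≤ vm μ Ω x := by
  unfold vm
  split <;> exact sum_nonneg fun y _ => hnn x y

lemma vm_pos_of_mem_bdry (hnn : ∀ x y, 0 ≤ μ x y) {z : V} (hz : z ∈ bdry μ Ω) :
    0 < vm μ Ω z := by
  obtain ⟨-, hzΩ, y, hy, hμ⟩ := mem_filter.mp hz
  rw [vm, if_neg hzΩ]
  exact sum_pos' (fun y _ => hnn z y) ⟨y, hy, hμ⟩

lemma msum_nonneg (hnn : ∀ x y, 0 ≤ μ x y) (B : Finset V) : 0 ≤ msum μ Ω B :=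
  sum_nonneg fun x _ => vm_nonneg hnn x

lemma edgeSum_nonneg (hnn : ∀ x y, 0 ≤ μ x y) {F : V → V → ℝ} (hF : ∀ x y, 0 ≤ F x y) :
    0 ≤ edgeSum μ Ω F := by
  have hterm : ∀ s t : Finset V, 0 ≤ ∑ x ∈ s, ∑ y ∈ t, μ x y * F x y := fun s t =>
    sum_nonneg fun x _ => sum_nonneg fun y _ => mul_nonneg (hnn x y) (hF x y)
  unfold edgeSum
  linarith [hterm Ω Ω, hterm Ω (bdry μ Ω)]

lemma cut_nonneg (hnn : ∀ x y, 0 ≤ μ x y) (A : Finset V) : 0 ≤ cut μ Ω A :=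
  edgeSum_nonneg hnn fun x y => by split <;> norm_num

lemma bddBelow_jammesRatios (hnn : ∀ x y, 0 ≤ μ x y) : BddBelow (jammesRatios μ Ω) := by
  refine ⟨0, ?_⟩
  rintro r ⟨A, -, -, -, rfl⟩
  exact div_nonneg (cut_nonneg hnn A) (msum_nonneg hnn _)

lemma escobarRatios_nonempty (hnn : ∀ x y, 0 ≤ μ x y) (hcard : 2 ≤ (bdry μ Ω).card) :
    (escobarRatios μ Ω).Nonempty := by
  obtain ⟨z, hz, hz_half⟩ :=
    exists_le_sum_div_two (fun x _ => vm_nonneg (Ω := Ω) hnn x) hcard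
  have hinter : {z} ∩ bdry μ Ω = {z} := singleton_inter_of_mem hz
  refine ⟨_, {z}, singleton_subset_iff.mpr (bdry_subset_clos μ Ω hz), ?_, ?_, rfl⟩
  · simpa [hinter, msum] using vm_pos_of_mem_bdry hnn hz
  · simpa [hinter, msum] using hz_half

lemma hJ_le_of_mem_escobarRatios (hnn : ∀ x y, 0 ≤ μ x y) {r : ℝ}
    (hr : r ∈ escobarRatios μ Ω) : hJ μ Ω ≤ r := by
  obtain ⟨A, hA, hpos, hhalf, rfl⟩ := hr
  rw [hJ_eq_sInf_jammesRatios]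
  by_cases hA_half : msum μ Ω A ≤ msum μ Ω (clos μ Ω) / 2
  · exact csInf_le (bddBelow_jammesRatios hnn)
      ⟨A, hA, nonempty_of_sum_ne_zero hpos.ne', hA_half, rfl⟩
  set B := clos μ Ω \ A
  have hsplit_bdry : msum μ Ω (A ∩ bdry μ Ω) + msum μ Ω (B ∩ bdry μ Ω)
      = msum μ Ω (bdry μ Ω) := by
    rw [sdiff_inter_bdry, inter_comm]
    exact sum_inter_add_sum_sdiff _ _ _
  have hsplit_clos : msum μ Ω B + msum μ Ω A = msum μ Ω (clos μ Ω) := sum_sdiff hA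
  have hB_bdry : msum μ Ω (A ∩ bdry μ Ω) ≤ msum μ Ω (B ∩ bdry μ Ω) := by linarith
  have hB_pos : 0 < msum μ Ω (B ∩ bdry μ Ω) := hpos.trans_le hB_bdry
  calc sInf (jammesRatios μ Ω) ≤ cut μ Ω B / msum μ Ω (B ∩ bdry μ Ω) :=
        csInf_le (bddBelow_jammesRatios hnn)
          ⟨B, sdiff_subset, nonempty_of_sum_ne_zero hB_pos.ne', by linarith, rfl⟩
    _ ≤ cut μ Ω A / msum μ Ω (A ∩ bdry μ Ω) := by
        rw [cut_clos_sdiff]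
        exact div_le_div_of_nonneg_left (cut_nonneg hnn A) hpos hB_bdry

end CheegerConstants

theorem stmt_14_general (μ : V → V → ℝ) (Ω : Finset V)
    (hnn : ∀ x y, 0 ≤ μ x y) (hcard : 2 ≤ (bdry μ Ω).card) :
    hJ μ Ω ≤ hE μ Ω := by
  rw [hE_eq_sInf_escobarRatios]
  exact le_csInf (escobarRatios_nonempty hnn hcard) fun _ => hJ_le_of_mem_escobarRatios hnn

/-- Proposition 4.1: h_J(Ω̃) ≤ h_E(Ω̃). -/
theorem stmt_14 (μ : V → V → ℝ) (Ω : Finset V)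
    (hsym : ∀ x y, μ x y = μ y x) (hnn : ∀ x y, 0 ≤ μ x y)
    (hconn : TilConnected μ Ω) (hcard : 2 ≤ (bdry μ Ω).card) :
    hJ μ Ω ≤ hE μ Ω :=
  stmt_14_general μ Ω hnn hcard
end
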